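/- Craig interpolation for propositional logic: if A and B are propositional formulas with A ∧ B unsatisfiable, then there exists a formula I using only variables occurring in both A and B such that A ⊨ I and I ∧ B is unsatisfiable. -/

import Mathlib

/-- Propositional variables. -/
abbrev Var := ℕ
/-- A total truth assignment. -/
abbrev Assignment := Var → Bool

/-- Propositional formulas. -/
inductive PForm
  | var (v : Var)
  | tru
  | fls
  | neg (p : PForm)
  | conj (p q : PForm)
  | disj (p q : PForm)
deriving DecidableEq

/-- Evaluation of a formula under an assignment. -/
def evalP (σ : Assignment) : PForm → Bool
  | .var v => σ v
  | .tru => true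
  | .fls => false
  | .neg p => !evalP σ p
  | .conj p q => evalP σ p && evalP σ q
  | .disj p q => evalP σ p || evalP σ q

/-- The variables syntactically occurring in a formula. -/
def PForm.vars : PForm → Finset Var
  | .var v => {v}
  | .tru => ∅
  | .fls => ∅
  | .neg p => p.vars
  | .conj p q => p.vars ∪ q.vars
  | .disj p q => p.vars ∪ q.vars

/-- Semantic entailment between formulas. -/
def entailsP (A B : PForm) : Prop := ∀ σ : Assignment, evalP σ A = true → evalP σ B = true


/-! The interpolant is `∃ x₁ … xₖ, A`, where `x₁, …, xₖ` are the variables of `A` not occurring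
in `B`, each Boolean quantifier expanded as `A[⊤/x] ∨ A[⊥/x]`. It is a consequence of `A` over the
shared variables; an assignment satisfying it and `B` can be changed on the `xᵢ` alone to satisfy
`A`, and this change does not affect `B`. -/

namespace PForm

def ofBool (b : Bool) : PForm := if b then tru else fls

def subst (v : Var) (b : Bool) : PForm → PForm
  | var w => if w = v then ofBool b else var w
  | tru => tru
  | fls => fls
  | neg p => neg (p.subst v b)
  | conj p q => conj (p.subst v b) (q.subst v b)
  | disj p q => disj (p.subst v b) (q.subst v b)

def existsVar (v : Var) (p : PForm) : PForm := disj (p.subst v true) (p.subst v false)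

def existsVars (l : List Var) (p : PForm) : PForm := l.foldr existsVar p

theorem vars_subst_subset (v : Var) (b : Bool) (p : PForm) :
    (p.subst v b).vars ⊆ p.vars.erase v := by
  induction p with
  | var w =>
    by_cases hw : w = v
    · cases b <;> simp [subst, ofBool, vars, hw]
    · simp [subst, vars, hw]
  | tru | fls => simp [subst, vars]
  | neg p ih => exact ih
  | conj p q ihp ihq | disj p q ihp ihq =>
    simpa only [subst, vars, Finset.erase_union_distrib] using Finset.union_subset_union ihp ihq

theorem vars_existsVar_subset (v : Var) (p : PForm) : (p.existsVar v).vars ⊆ p.vars.erase v :=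
  Finset.union_subset (vars_subst_subset v true p) (vars_subst_subset v false p)

theorem vars_existsVars_subset (l : List Var) (p : PForm) :
    (p.existsVars l).vars ⊆ p.vars \ l.toFinset := by
  induction l with
  | nil => simp [existsVars]
  | cons v l ih =>
    intro x hx
    have hx' := vars_existsVar_subset v _ hx
    simp only [Finset.mem_erase] at hx'
    have := ih hx'.2
    simp_all

end PForm

open PForm

theorem evalP_ofBool (σ : Assignment) (b : Bool) : evalP σ (ofBool b) = b := by
  cases b <;> rfl

theorem evalP_subst (σ : Assignment) (v : Var) (b : Bool) (p : PForm) :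
    evalP σ (p.subst v b) = evalP (Function.update σ v b) p := by
  induction p with
  | var w =>
    by_cases hw : w = v
    · subst hw; simp [subst, evalP, evalP_ofBool]
    · simp [subst, evalP, hw]
  | tru | fls => rfl
  | neg p ih => simp [subst, evalP, ih]
  | conj p q ihp ihq | disj p q ihp ihq => simp [subst, evalP, ihp, ihq]

theorem evalP_existsVar (σ : Assignment) (v : Var) (p : PForm) :
    evalP σ (p.existsVar v) = true ↔ ∃ b, evalP (Function.update σ v b) p = true := by
  simp [existsVar, evalP, evalP_subst, or_comm]

theorem evalP_existsVars (σ : Assignment) (l : List Var) (p : PForm) :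
    evalP σ (p.existsVars l) = true ↔ ∃ τ : Assignment, (∀ w ∉ l, τ w = σ w) ∧ evalP τ p = true := by
  induction l generalizing σ with
  | nil => exact ⟨fun h => ⟨σ, fun _ _ => rfl, h⟩, fun ⟨τ, hτ, h⟩ => funext (hτ · List.not_mem_nil) ▸ h⟩
  | cons v l ih =>
    simp only [existsVars, List.foldr_cons] at ih ⊢
    rw [evalP_existsVar]
    constructor
    · rintro ⟨b, hb⟩
      obtain ⟨τ, hτ, hp⟩ := (ih _).1 hb
      refine ⟨τ, fun w hw => ?_, hp⟩
      simp only [List.mem_cons, not_or] at hw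
      rw [hτ w hw.2, Function.update_of_ne hw.1]
    · rintro ⟨τ, hτ, hp⟩
      refine ⟨τ v, (ih _).2 ⟨τ, fun w hw => ?_, hp⟩⟩
      by_cases hwv : w = v
      · subst hwv; simp
      · rw [Function.update_of_ne hwv, hτ w (by simp [hwv, hw])]

theorem evalP_congr {σ τ : Assignment} {p : PForm} (h : ∀ v ∈ p.vars, σ v = τ v) :
    evalP σ p = evalP τ p := by
  induction p with
  | var w => exact h w (by simp [vars])
  | tru | fls => rfl
  | neg p ih => simp only [evalP, ih h]
  | conj p q ihp ihq | disj p q ihp ihq =>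
    simp only [vars, Finset.mem_union] at h
    simp only [evalP, ihp fun v hv => h v (.inl hv), ihq fun v hv => h v (.inr hv)]

/-- Craig interpolation for propositional logic: if `A ∧ B` is
unsatisfiable, there exists a formula `I` over the variables common to `A` and
`B` with `A ⊨ I` and `I ∧ B` unsatisfiable. -/
theorem craig_interpolation (A B : PForm)
    (h : ¬ ∃ σ : Assignment, evalP σ A = true ∧ evalP σ B = true) :
    ∃ I : PForm, I.vars ⊆ A.vars ∩ B.vars ∧ entailsP A I ∧
      ¬ ∃ σ : Assignment, evalP σ I = true ∧ evalP σ B = true := by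
  set onlyInA := (A.vars \ B.vars).toList
  refine ⟨A.existsVars onlyInA, ?_, ?_, ?_⟩
  · intro x hx
    have := vars_existsVars_subset onlyInA A hx
    simp_all [onlyInA]
  · exact fun σ hA => (evalP_existsVars σ _ A).2 ⟨σ, fun _ _ => rfl, hA⟩
  · rintro ⟨σ, hI, hB⟩
    obtain ⟨τ, hτσ, hA⟩ := (evalP_existsVars σ _ A).1 hI
    have hτB : evalP τ B = true := by
      rw [evalP_congr fun v hv => hτσ v (by simp [onlyInA, hv]), hB]
    exact h ⟨τ, hA, hτB⟩
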